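/- arXiv:0811.3161 — 3 statements merged into one kernel-verified Lean document; each statement's English description precedes it below -/
import Mathlib

section
/- Let π be an ordered matching between multisets U and V of linear forms by an ordered form-ideal I = {v_1,...,v_i}. If U and V are similar multisets, then M(V) = sc(π) · M(U), where M(·) denotes the product of the forms in the multiset. Consequently all ordered matchings between a fixed pair of similar multisets have the same scaling factor. -/
/-!
Extend `v` to a basis of `Fⁿ` and let `φ : Fⁿ → F[X]` send `v k` to `X ^ k` and the remaining
basis vectors to distinct powers `X ^ m` with `m ≥ i`; then `φ⁻¹ (F[X]_j) = sp_j` for `j ≤ i`.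
If `π ℓ = c • ℓ + w` with `w ∈ sp_j` and `ℓ ∉ sp_j`, then `deg φ w < j ≤ deg φ ℓ`, so the leading
coefficient of `φ (π ℓ)` is `c` times that of `φ ℓ`. Substituting `φ` of the coordinate vectors
into the similarity identity `M(V) = e • M(U)` and comparing leading coefficients gives
`e = sc(π)`.
-/

open MvPolynomial

noncomputable def toPoly {F : Type*} [Field F] {n : ℕ} (v : Fin n → F) :
    MvPolynomial (Fin n) F := ∑ i, MvPolynomial.C (v i) * MvPolynomial.X i

def spUpTo {F : Type*} [Field F] {n i : ℕ} (v : Fin i → (Fin n → F)) (j : ℕ) :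
    Submodule F (Fin n → F) :=
  Submodule.span F (v '' {t | (t : ℕ) < j})

open Polynomial Submodule

section Flag

variable {K M : Type*} [Field K] [AddCommGroup M] [Module K M]

theorem Module.Basis.sumExtend_apply_inl {ι : Type*} {v : ι → M} (hv : LinearIndependent K v)
    (k : ι) : Basis.sumExtend hv (Sum.inl k) = v k := by
  simp only [Basis.sumExtend, Basis.reindex_apply, Basis.extend_apply_self]
  rfl

variable {ι : Type*} [Fintype ι] (b : Module.Basis ι K M) {g : ι → ℕ}

theorem Module.Basis.coeff_constr_X_pow (hg : g.Injective) (u : M) (m : ι) :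
    (b.constr K (fun k => (X : K[X]) ^ g k) u).coeff (g m) = b.repr u m := by
  classical
  simp [b.constr_apply_fintype K, Polynomial.coeff_X_pow, hg.eq_iff]

theorem Module.Basis.comap_constr_X_pow_degreeLT (hg : g.Injective) {s : Set ι} {N : ℕ}
    (hs : ∀ k, k ∈ s ↔ g k < N) :
    (degreeLT K N).comap (b.constr K (fun k => (X : K[X]) ^ g k)) = span K (b '' s) := by
  refine le_antisymm (fun u hu => ?_) (span_le.2 ?_)
  · rw [b.mem_span_image]
    intro m hm
    rw [hs]
    by_contra! hNm
    rw [mem_comap, mem_degreeLT, degree_lt_iff_coeff_zero] at hu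
    exact Finsupp.mem_support_iff.1 hm (b.coeff_constr_X_pow hg u m ▸ hu _ hNm)
  · rintro _ ⟨k, hk, rfl⟩
    rw [SetLike.mem_coe, mem_comap, b.constr_basis, mem_degreeLT, degree_X_pow]
    exact_mod_cast (hs k).1 hk

theorem LinearIndependent.exists_comap_degreeLT_eq_span [FiniteDimensional K M] {i : ℕ}
    {v : Fin i → M} (hv : LinearIndependent K v) :
    ∃ φ : M →ₗ[K] K[X], ∀ j ≤ i,
      (degreeLT K j).comap φ = span K (v '' {t | (t : ℕ) < j}) := by
  set b := Module.Basis.sumExtend hv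
  have : Finite (Fin i ⊕ Module.Basis.sumExtendIndex hv) := Module.Finite.finite_basis b
  have : Fintype (Fin i ⊕ Module.Basis.sumExtendIndex hv) := Fintype.ofFinite _
  have : Finite (Module.Basis.sumExtendIndex hv) :=
    Finite.of_injective (Sum.inr (α := Fin i)) Sum.inr_injective
  obtain ⟨emb, hemb⟩ := exists_injective_nat (Module.Basis.sumExtendIndex hv)
  set g : Fin i ⊕ Module.Basis.sumExtendIndex hv → ℕ := Sum.elim (↑) (i + emb ·)
  have hg : g.Injective := by
    rintro (a | a) (a' | a') h <;> simp only [g, Sum.elim_inl, Sum.elim_inr] at h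
    · exact congrArg Sum.inl (Fin.val_injective h)
    · omega
    · omega
    · exact congrArg Sum.inr (hemb (by omega))
  refine ⟨b.constr K (fun k => (X : K[X]) ^ g k), fun j hj => ?_⟩
  have himage : v '' {t | (t : ℕ) < j} = b '' (Sum.inl '' {t | (t : ℕ) < j}) := by
    rw [Set.image_image]
    exact Set.image_congr fun t _ => (Module.Basis.sumExtend_apply_inl hv t).symm
  rw [himage]
  refine b.comap_constr_X_pow_degreeLT hg fun k => ?_
  rcases k with t | s
  · simp [g]
  · simp only [g, Sum.elim_inr, Set.mem_image, reduceCtorEq, and_false, exists_false, false_iff]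
    omega

end Flag

section Leading

variable {K M : Type*} [Field K] [AddCommGroup M] [Module K M]

theorem leadingCoeff_smul_add_of_comap_degreeLT {φ : M →ₗ[K] K[X]} {N : ℕ} {S : Submodule K M}
    (hφ : (degreeLT K N).comap φ = S) {c : K} (hc : c ≠ 0) {u w : M} (hu : u ∉ S)
    (hw : w ∈ S) : (φ (c • u + w)).leadingCoeff = c * (φ u).leadingCoeff := by
  rw [← hφ, mem_comap, mem_degreeLT, not_lt] at hu
  rw [← hφ, mem_comap, mem_degreeLT] at hw
  rw [map_add, map_smul, Polynomial.smul_eq_C_mul, leadingCoeff_add_of_degree_lt',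
    leadingCoeff_mul, leadingCoeff_C]
  rw [degree_C_mul hc]
  exact hw.trans_le hu

theorem prod_leadingCoeff_of_matching {ι : Type*} [Fintype ι] {i : ℕ} {v : Fin i → M}
    {φ : M →ₗ[K] K[X]} (hφ : ∀ j ≤ i, (degreeLT K j).comap φ = span K (v '' {t | (t : ℕ) < j}))
    {U V : ι → M} (π : Equiv.Perm ι) {c : ι → K}
    (hmatch : ∀ t, c t ≠ 0 ∧ ∃ j ≤ i, V (π t) - c t • U t ∈ span K (v '' {t | (t : ℕ) < j}) ∧
      U t ∉ span K (v '' {t | (t : ℕ) < j})) :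
    ∏ t, (φ (V t)).leadingCoeff = (∏ t, c t) * ∏ t, (φ (U t)).leadingCoeff := by
  rw [← Equiv.prod_comp π (fun t => (φ (V t)).leadingCoeff), ← Finset.prod_mul_distrib]
  refine Finset.prod_congr rfl fun t _ => ?_
  obtain ⟨hc, j, hj, hw, hu⟩ := hmatch t
  rw [← leadingCoeff_smul_add_of_comap_degreeLT (hφ j hj) hc hu hw, add_sub_cancel]

theorem ne_zero_of_notMem_comap_degreeLT {φ : M →ₗ[K] K[X]} {N : ℕ} {S : Submodule K M}
    (hφ : (degreeLT K N).comap φ = S) {u : M} (hu : u ∉ S) : φ u ≠ 0 := by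
  intro h0
  rw [← hφ, mem_comap, h0] at hu
  exact hu (zero_mem _)

end Leading

section Forms

variable {F : Type*} [Field F] {n : ℕ}

theorem toPoly_smul (a : F) (u : Fin n → F) :
    toPoly (a • u) = MvPolynomial.C a * toPoly u := by
  simp [toPoly, Finset.mul_sum, mul_assoc]

theorem aeval_toPoly {A : Type*} [CommSemiring A] [Algebra F A] (L : (Fin n → F) →ₗ[F] A)
    (u : Fin n → F) : aeval (fun k => L (Pi.single k 1)) (toPoly u) = L u := by
  conv_rhs => rw [← Finset.univ_sum_single u]
  simp only [toPoly, map_sum, map_mul, MvPolynomial.aeval_C, MvPolynomial.aeval_X]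
  refine Finset.sum_congr rfl fun k _ => ?_
  rw [← Algebra.smul_def, ← map_smul, ← Pi.single_smul', smul_eq_mul, mul_one]

theorem prod_toPoly_eq_of_similar {ι : Type*} [Fintype ι] {U V : ι → Fin n → F}
    (σ : Equiv.Perm ι) {e : ι → F} (h : ∀ t, V (σ t) = e t • U t) :
    ∏ t, toPoly (V t) = MvPolynomial.C (∏ t, e t) * ∏ t, toPoly (U t) := by
  rw [← Equiv.prod_comp σ (fun t => toPoly (V t))]
  simp only [h, toPoly_smul, Finset.prod_mul_distrib, map_prod]

theorem eq_of_prod_toPoly_eq {ι : Type*} [Fintype ι] {U V : ι → Fin n → F} {a b : F}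
    (φ : (Fin n → F) →ₗ[F] F[X]) (hU : ∀ t, φ (U t) ≠ 0)
    (hlc : ∏ t, (φ (V t)).leadingCoeff = b * ∏ t, (φ (U t)).leadingCoeff)
    (hprod : ∏ t, toPoly (V t) = MvPolynomial.C a * ∏ t, toPoly (U t)) : b = a := by
  have hφ := congrArg (fun p => (aeval (fun k => φ (Pi.single k 1)) p).leadingCoeff) hprod
  simp only [map_mul, map_prod, aeval_toPoly, MvPolynomial.aeval_C, Polynomial.algebraMap_apply,
    Algebra.algebraMap_self, RingHom.id_apply, leadingCoeff_mul, leadingCoeff_C,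
    leadingCoeff_prod] at hφ
  refine mul_right_cancel₀ ?_ (hlc.symm.trans hφ)
  exact Finset.prod_ne_zero_iff.2 fun t _ => leadingCoeff_ne_zero.2 (hU t)

end Forms

/-- if an ordered matching (with scalars `c`) exists between
similar multisets `U`, `V`, then `M(V) = sc(π) · M(U)`, where `sc(π) = ∏ c t`. -/
theorem stmt8 {F : Type*} [Field F] {n i d : ℕ}
    (v : Fin i → (Fin n → F)) (hv : LinearIndependent F v)
    (U V : Fin d → (Fin n → F))
    (π : Equiv.Perm (Fin d)) (c : Fin d → F)
    (hmatch : ∀ t, c t ≠ 0 ∧ ∃ j ≤ i,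
      (V (π t) - c t • U t) ∈ spUpTo v j ∧ U t ∉ spUpTo v j)
    (hsim : ∃ σ : Equiv.Perm (Fin d), ∀ t, ∃ e : F, e ≠ 0 ∧ V (σ t) = e • U t) :
    (∏ t, toPoly (V t)) = MvPolynomial.C (∏ t, c t) * ∏ t, toPoly (U t) := by
  obtain ⟨σ, hσ⟩ := hsim
  choose e _ hVe using hσ
  have hsimilar := prod_toPoly_eq_of_similar σ hVe
  obtain ⟨φ, hφ⟩ := hv.exists_comap_degreeLT_eq_span
  have hU : ∀ t, φ (U t) ≠ 0 := fun t => by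
    obtain ⟨-, j, hj, -, hu⟩ := hmatch t
    exact ne_zero_of_notMem_comap_degreeLT (hφ j hj) hu
  rw [hsimilar,
    eq_of_prod_toPoly_eq φ hU (prod_leadingCoeff_of_matching hφ π hmatch) hsimilar]
end

section
/- Let C = Σ_{j=1}^k T_j be a sum of multiplication terms, let Q ⊆ [k], and let ℓ be a nonzero linear form. Then ℓ has a similar copy in the multiset of forms of sim(C_Q) (the simple part of the subcircuit C_Q with I = {0}) if and only if there exist q_1, q_2 ∈ Q with #simi(ℓ, L(T_{q_1})) ≠ #simi(ℓ, L(T_{q_2})), where #simi(ℓ, S) counts the forms in multiset S that are scalar multiples of ℓ. -/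
open scoped Classical

/-- `#simi(ℓ, S)`: the number of forms in the multiset `S` that are nonzero scalar
multiples of `ℓ`. -/
noncomputable def simiCount {F : Type*} [Field F] {n : ℕ}
    (ℓ : Fin n → F) (S : Multiset (Fin n → F)) : ℕ :=
  Multiset.card (S.filter (fun m => ∃ c : F, c ≠ 0 ∧ m = c • ℓ))

lemma simiCount_add {F : Type*} [Field F] {n : ℕ}
    (ℓ : Fin n → F) (S T : Multiset (Fin n → F)) :
    simiCount ℓ (S + T) = simiCount ℓ S + simiCount ℓ T := by
  simp [simiCount, Multiset.filter_add]

lemma simiCount_rel {F : Type*} [Field F] {n : ℕ} (ℓ : Fin n → F)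
    {U V : Multiset (Fin n → F)}
    (h : Multiset.Rel (fun u v => ∃ e : F, e ≠ 0 ∧ v = e • u) U V) :
    simiCount ℓ U = simiCount ℓ V := by
  induction h with
  | zero => rfl
  | @cons a b as bs huv hrel ih =>
    obtain ⟨e, he, rfl⟩ := huv
    unfold simiCount at *
    rw [Multiset.filter_cons, Multiset.filter_cons]
    have : (∃ c : F, c ≠ 0 ∧ e • a = c • ℓ) ↔ (∃ c : F, c ≠ 0 ∧ a = c • ℓ) := by
      constructor
      · rintro ⟨c, hc, h⟩
        refine ⟨e⁻¹ * c, by simp [he, hc], ?_⟩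
        rw [mul_smul, ← h, ← mul_smul, inv_mul_cancel₀ he, one_smul]
      · rintro ⟨c, hc, h⟩
        exact ⟨e * c, mul_ne_zero he hc, by rw [mul_smul, ← h]⟩
    by_cases hp : ∃ c : F, c ≠ 0 ∧ a = c • ℓ
    · rw [if_pos (this.mpr hp), if_pos hp]; simp [ih]
    · rw [if_neg (fun hh => hp (this.mp hh)), if_neg hp]; simp [ih]

/-- a nonzero form `ℓ` appears (up to similarity) in the simple part of
the subcircuit `C_Q` iff the multiplicities `#simi(ℓ, L(T_q))` differ between two
terms of `Q`. Here the gcd data `(U, Uq)` of `C_Q` (with `I = {0}`) is given: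
`Uq q ≤ L q` is similar to the common `U`, and the remainders have no common
similarity class (maximality of the gcd). -/
theorem stmt11 {F : Type*} [Field F] {n k : ℕ}
    (α : Fin k → F) (hα : ∀ q, α q ≠ 0)
    (L : Fin k → Multiset (Fin n → F)) (hnz : ∀ q, ∀ m ∈ L q, m ≠ 0)
    (Q : Finset (Fin k)) (hQ : Q.Nonempty)
    (U : Multiset (Fin n → F)) (Uq : Fin k → Multiset (Fin n → F))
    (hsub : ∀ q ∈ Q, Uq q ≤ L q)
    (hsim : ∀ q ∈ Q, Multiset.Rel (fun u v => ∃ e : F, e ≠ 0 ∧ v = e • u) U (Uq q))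
    (hmax : ∀ m : Fin n → F, m ≠ 0 → ∃ q ∈ Q, simiCount m (L q - Uq q) = 0)
    (ℓ : Fin n → F) (hℓ : ℓ ≠ 0) :
    (∃ q ∈ Q, 0 < simiCount ℓ (L q - Uq q)) ↔
      (∃ q1 ∈ Q, ∃ q2 ∈ Q, simiCount ℓ (L q1) ≠ simiCount ℓ (L q2)) := by
  have key : ∀ q ∈ Q, simiCount ℓ (L q) = simiCount ℓ U + simiCount ℓ (L q - Uq q) := by
    intro q hq
    have h1 : Uq q + (L q - Uq q) = L q := add_tsub_cancel_of_le (hsub q hq)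
    conv_lhs => rw [← h1]
    rw [simiCount_add, simiCount_rel ℓ (hsim q hq)]
  constructor
  · rintro ⟨q, hq, hpos⟩
    obtain ⟨q', hq', hz⟩ := hmax ℓ hℓ
    refine ⟨q, hq, q', hq', ?_⟩
    rw [key q hq, key q' hq', hz]
    omega
  · rintro ⟨q1, hq1, q2, hq2, hne⟩
    rw [key q1 hq1, key q2 hq2] at hne
    rcases Nat.lt_or_ge 0 (simiCount ℓ (L q1 - Uq q1)) with h | h
    · exact ⟨q1, hq1, h⟩
    · exact ⟨q2, hq2, by omega⟩
end

section
/- Let D = Σ_{j=1}^{k} T_j = 0 be a minimal depth-3 identity over a field F (no proper nonempty subset of the terms sums to zero), and let S_1, S_2, S_3 be multiplication terms in disjoint fresh variables with S_1 + S_2 + S_3 = 0, such that S_1, S_2, S_3 are pairwise coprime polynomials. Then the circuit D' := (Σ_{j=1}^{k−1} T_j)·S_1 − T_k·S_2 − T_k·S_3 is a minimal identity: it equals zero, but no proper nonempty subset of its k+1 terms sums to zero. -/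
/-- given a minimal depth-3 identity `Σ_{j=1}^{m+2} T_j = 0` and
pairwise coprime `S₁, S₂, S₃` (in fresh variables, so their prime factors divide no
`T_j`) with `S₁ + S₂ + S₃ = 0`, the circuit
`(Σ_{j≤m+1} T_j)·S₁ − T_{m+2}·S₂ − T_{m+2}·S₃` is a minimal identity:
it is zero, but no proper nonempty subset of its `m+3` terms sums to zero. -/
theorem stmt15 {F : Type*} [Field F] {N m : ℕ}
    (T : Fin (m + 2) → MvPolynomial (Fin N) F)
    (S1 S2 S3 : MvPolynomial (Fin N) F)
    (hD : ∑ j, T j = 0)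
    (hmin : ∀ P : Finset (Fin (m + 2)), P.Nonempty → P ≠ Finset.univ →
      ∑ j ∈ P, T j ≠ 0)
    (hS : S1 + S2 + S3 = 0)
    (hS1ne : S1 ≠ 0) (hS2ne : S2 ≠ 0) (hS3ne : S3 ≠ 0)
    (hS1u : ¬ IsUnit S1) (hS2u : ¬ IsUnit S2) (hS3u : ¬ IsUnit S3)
    (hcop12 : ∀ p : MvPolynomial (Fin N) F, ¬ IsUnit p → p ∣ S1 → ¬ p ∣ S2)
    (hcop13 : ∀ p : MvPolynomial (Fin N) F, ¬ IsUnit p → p ∣ S1 → ¬ p ∣ S3)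
    (hcop23 : ∀ p : MvPolynomial (Fin N) F, ¬ IsUnit p → p ∣ S2 → ¬ p ∣ S3)
    (hfresh : ∀ p : MvPolynomial (Fin N) F, Prime p →
      (p ∣ S1 ∨ p ∣ S2 ∨ p ∣ S3) → ∀ j, ¬ p ∣ T j) :
    ((∑ j : Fin (m + 1), T j.castSucc) * S1
        - T (Fin.last (m + 1)) * S2 - T (Fin.last (m + 1)) * S3 = 0) ∧
    (∀ (P : Finset (Fin (m + 1))) (b2 b3 : Bool),
      (P.Nonempty ∨ b2 = true ∨ b3 = true) →
      ¬ (P = Finset.univ ∧ b2 = true ∧ b3 = true) →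
      (∑ j ∈ P, T j.castSucc) * S1
          - (if b2 then T (Fin.last (m + 1)) * S2 else 0)
          - (if b3 then T (Fin.last (m + 1)) * S3 else 0) ≠ 0) := by
  classical
  have hD' : (∑ j : Fin (m + 1), T j.castSucc) + T (Fin.last (m + 1)) = 0 := by
    rw [← Fin.sum_univ_castSucc]; exact hD
  set TL := T (Fin.last (m + 1)) with hTL
  have hprime : ∀ s : MvPolynomial (Fin N) F, s ≠ 0 → ¬IsUnit s →
      ∃ q, Prime q ∧ q ∣ s := by
    intro s hs hu
    obtain ⟨q, hq, hd⟩ := WfDvdMonoid.exists_irreducible_factor hu hs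
    exact ⟨q, hq.prime, hd⟩
  have hTLne : TL ≠ 0 := by
    have h1 : ({Fin.last (m + 1)} : Finset (Fin (m + 2))) ≠ Finset.univ := by
      intro h
      have h0 : (0 : Fin (m + 2)) ∈ ({Fin.last (m + 1)} : Finset (Fin (m + 2))) := by
        rw [h]; exact Finset.mem_univ _
      simp only [Finset.mem_singleton] at h0
      exact Fin.last_pos.ne' h0.symm
    have := hmin {Fin.last (m + 1)} ⟨_, Finset.mem_singleton_self _⟩ h1
    simpa using this
  have hA : ∀ P : Finset (Fin (m + 1)), P.Nonempty → (∑ j ∈ P, T j.castSucc) ≠ 0 := by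
    intro P hP
    set e : Fin (m + 1) ↪ Fin (m + 2) := ⟨Fin.castSucc, Fin.castSucc_injective _⟩ with he
    have hlast : Fin.last (m + 1) ∉ P.map e := by
      intro h
      obtain ⟨j, _, hj⟩ := Finset.mem_map.mp h
      exact (Fin.castSucc_lt_last j).ne hj
    have hne : P.map e ≠ Finset.univ := fun h => hlast (h ▸ Finset.mem_univ _)
    have := hmin (P.map e) ((Finset.map_nonempty).mpr hP) hne
    rwa [Finset.sum_map] at this
  have hAT : ∀ P : Finset (Fin (m + 1)), P ≠ Finset.univ →
      (∑ j ∈ P, T j.castSucc) + TL ≠ 0 := by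
    intro P hP
    set e : Fin (m + 1) ↪ Fin (m + 2) := ⟨Fin.castSucc, Fin.castSucc_injective _⟩ with he
    have hlast : Fin.last (m + 1) ∉ P.map e := by
      intro h
      obtain ⟨j, _, hj⟩ := Finset.mem_map.mp h
      exact (Fin.castSucc_lt_last j).ne hj
    obtain ⟨i, hi⟩ : ∃ i, i ∉ P := by
      by_contra h
      push_neg at h
      exact hP (Finset.eq_univ_iff_forall.mpr h)
    have hne : insert (Fin.last (m + 1)) (P.map e) ≠ Finset.univ := by
      intro h
      have : (Fin.castSucc i) ∈ insert (Fin.last (m + 1)) (P.map e) := by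
        rw [h]; exact Finset.mem_univ _
      rcases Finset.mem_insert.mp this with h1 | h1
      · exact (Fin.castSucc_lt_last i).ne h1
      · obtain ⟨j, hj, hj2⟩ := Finset.mem_map.mp h1
        exact hi ((Fin.castSucc_injective _ hj2) ▸ hj)
    have := hmin (insert (Fin.last (m + 1)) (P.map e))
      ⟨_, Finset.mem_insert_self _ _⟩ hne
    rw [Finset.sum_insert hlast, Finset.sum_map] at this
    intro h
    exact this (by rw [add_comm] at h; exact h)
  constructor
  · linear_combination S1 * hD' - TL * hS
  · intro P b2 b3 hne hnotall heq
    cases b2 <;> cases b3 <;> simp only [if_true, if_false, Bool.true_eq_false,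
      Bool.false_eq_true, or_false, false_or, and_true, and_false, not_and,
      sub_zero] at hne hnotall heq
    · -- b2 = false, b3 = false
      rcases mul_eq_zero.mp heq with h | h
      · exact hA P hne h
      · exact hS1ne h
    · -- b2 = false, b3 = true
      have hq : (∑ j ∈ P, T j.castSucc) * S1 = TL * S3 := by linear_combination heq
      obtain ⟨q, hqp, hqd⟩ := hprime S1 hS1ne hS1u
      have hdvd : q ∣ TL * S3 := by rw [← hq]; exact hqd.mul_left _
      rcases (hqp.dvd_mul.mp hdvd) with h | h
      · exact hfresh q hqp (Or.inl hqd) (Fin.last (m + 1)) h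
      · exact hcop13 q hqp.not_unit hqd h
    · -- b2 = true, b3 = false
      have hq : (∑ j ∈ P, T j.castSucc) * S1 = TL * S2 := by linear_combination heq
      obtain ⟨q, hqp, hqd⟩ := hprime S1 hS1ne hS1u
      have hdvd : q ∣ TL * S2 := by rw [← hq]; exact hqd.mul_left _
      rcases (hqp.dvd_mul.mp hdvd) with h | h
      · exact hfresh q hqp (Or.inl hqd) (Fin.last (m + 1)) h
      · exact hcop12 q hqp.not_unit hqd h
    · -- b2 = true, b3 = true
      have hunivne : P ≠ Finset.univ := by
        intro h
        simp only [h] at hnotall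
        simp_all
      have h0 : ((∑ j ∈ P, T j.castSucc) + TL) * S1 = 0 := by
        linear_combination heq + TL * hS
      rcases mul_eq_zero.mp h0 with h | h
      · exact hAT P hunivne h
      · exact hS1ne h
end
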